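/- For a bounded interval [a,b] ⊂ ℝ, ξ ∈ ℝ with |ξ| > 0, and h ∈ ℝ with |h| ≤ |ξ|/2, the Fourier transform of the indicator satisfies χ̂_{[a,b]}(ξ + h) = e(-(a+b)h/2) χ̂_{[a,b]}(ξ) + O(|h| · min(|ξ|^{-1}, |ξ|)), with implied constant depending only on b - a. -/

import Mathlib

open Real

/-- The Fourier transform of the indicator function of `[a, b]`:
`χ̂_{[a,b]}(ξ) = ∫_a^b e^{-2πitξ} dt`. -/
noncomputable def chiHat (a b ξ : ℝ) : ℂ :=
  ∫ t in a..b, Complex.exp (-(2*π*t*ξ) * Complex.I)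

lemma chiHat_eq (a b ξ : ℝ) (hξ : ξ ≠ 0) :
    chiHat a b ξ = Complex.exp (-(2*π*((a+b)/2)*ξ) * Complex.I)
      * ((Real.sin (π*(b-a)*ξ) / (π*ξ) : ℝ) : ℂ) := by
  have hπ : (π:ℝ) ≠ 0 := Real.pi_ne_zero
  have hπξ : ((π:ℂ) * ξ) ≠ 0 := by
    simp [Real.pi_ne_zero, hξ, Complex.ofReal_ne_zero]
  have hc : (-(2*(π:ℂ)*ξ) * Complex.I) ≠ 0 := by
    simp [Real.pi_ne_zero, hξ, Complex.I_ne_zero, Complex.ofReal_ne_zero]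
  have h1 : chiHat a b ξ = ∫ t in a..b, Complex.exp ((-(2*(π:ℂ)*ξ) * Complex.I) * t) := by
    unfold chiHat
    congr 1
    ext t
    ring_nf
  have hsin : Complex.sin ((π:ℂ)*((b:ℂ)-(a:ℂ))*(ξ:ℂ))
      = (Complex.exp (-((π:ℂ)*((b:ℂ)-(a:ℂ))*(ξ:ℂ)) * Complex.I)
        - Complex.exp (((π:ℂ)*((b:ℂ)-(a:ℂ))*(ξ:ℂ)) * Complex.I)) * Complex.I / 2 := by
    rw [Complex.sin]
  have e1 : Complex.exp (-(2*(π:ℂ)*(((a:ℂ)+(b:ℂ))/2)*(ξ:ℂ)) * Complex.I)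
      * Complex.exp (-((π:ℂ)*((b:ℂ)-(a:ℂ))*(ξ:ℂ)) * Complex.I)
      = Complex.exp ((-(2*(π:ℂ)*ξ) * Complex.I) * b) := by
    rw [← Complex.exp_add]; congr 1; push_cast; ring
  have e2 : Complex.exp (-(2*(π:ℂ)*(((a:ℂ)+(b:ℂ))/2)*(ξ:ℂ)) * Complex.I)
      * Complex.exp (((π:ℂ)*((b:ℂ)-(a:ℂ))*(ξ:ℂ)) * Complex.I)
      = Complex.exp ((-(2*(π:ℂ)*ξ) * Complex.I) * a) := by
    rw [← Complex.exp_add]; congr 1; push_cast; ring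
  have hI : Complex.I * Complex.I = -1 := Complex.I_mul_I
  rw [h1, integral_exp_mul_complex hc, div_eq_iff hc]
  push_cast
  rw [show Complex.exp (-(2 * (π:ℂ) * (((a:ℂ) + (b:ℂ)) / 2) * (ξ:ℂ)) * Complex.I) *
        (Complex.sin ((π:ℂ) * ((b:ℂ) - (a:ℂ)) * (ξ:ℂ)) / ((π:ℂ) * (ξ:ℂ))) *
        (-(2 * (π:ℂ) * (ξ:ℂ)) * Complex.I)
      = Complex.exp (-(2 * (π:ℂ) * (((a:ℂ) + (b:ℂ)) / 2) * (ξ:ℂ)) * Complex.I) *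
        Complex.sin ((π:ℂ) * ((b:ℂ) - (a:ℂ)) * (ξ:ℂ)) * (-2 * Complex.I) from by
    field_simp [Complex.ofReal_ne_zero.mpr hξ]]
  rw [hsin]
  linear_combination e2 - e1 +
    (Complex.exp (-(2*(π:ℂ)*(((a:ℂ)+(b:ℂ))/2)*(ξ:ℂ)) * Complex.I)
      * (Complex.exp (-((π:ℂ)*((b:ℂ)-(a:ℂ))*(ξ:ℂ)) * Complex.I)
        - Complex.exp (((π:ℂ)*((b:ℂ)-(a:ℂ))*(ξ:ℂ)) * Complex.I))) * hI

lemma sin_sub_mul_cos_bound (t : ℝ) : |Real.sin t - t * Real.cos t| ≤ |t|^3 := by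
  have hderiv : ∀ s ∈ Set.uIcc (0:ℝ) t, HasDerivAt (fun u => Real.sin u - u * Real.cos u)
      (s * Real.sin s) s := by
    intro s _
    have h1 := (Real.hasDerivAt_sin s).sub ((hasDerivAt_id s).mul (Real.hasDerivAt_cos s))
    refine h1.congr_deriv ?_
    simp only [id]
    ring
  have hint : IntervalIntegrable (fun s => s * Real.sin s) MeasureTheory.volume 0 t :=
    (continuous_id.mul Real.continuous_sin).intervalIntegrable 0 t
  have heq : (∫ s in (0:ℝ)..t, s * Real.sin s)
      = (Real.sin t - t * Real.cos t) - (Real.sin 0 - 0 * Real.cos 0) :=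
    intervalIntegral.integral_eq_sub_of_hasDerivAt hderiv hint
  have hb : ‖∫ s in (0:ℝ)..t, s * Real.sin s‖ ≤ t^2 * |t - 0| := by
    apply intervalIntegral.norm_integral_le_of_norm_le_const
    intro x hx
    have hx' : |x| ≤ |t| := by
      rcases Set.mem_uIoc.mp hx with h | h
      · rw [abs_of_nonneg h.1.le, abs_of_nonneg (h.1.le.trans h.2)]; exact h.2
      · rw [abs_of_nonpos h.2, abs_of_nonpos (h.1.le.trans h.2)]; linarith [h.1]
    calc ‖x * Real.sin x‖ = |x| * |Real.sin x| := abs_mul _ _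
      _ ≤ |t| * |t| :=
          mul_le_mul hx' ((Real.abs_sin_le_abs).trans hx') (abs_nonneg _) (abs_nonneg _)
      _ = t^2 := by rw [abs_mul_abs_self, sq]
  rw [Real.norm_eq_abs, heq] at hb
  simp only [Real.sin_zero, Real.cos_zero, zero_mul, sub_zero, mul_zero] at hb
  calc |Real.sin t - t * Real.cos t| ≤ t^2 * |t| := by simpa using hb
    _ = |t|^3 := by rcases abs_cases t with ⟨h,_⟩ | ⟨h,_⟩ <;> rw [h] <;> ring

lemma hasDerivAt_sinc (L x : ℝ) (hx : x ≠ 0) :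
    HasDerivAt (fun y => Real.sin (π*L*y) / (π*y))
      ((π*L*x*Real.cos (π*L*x) - Real.sin (π*L*x)) / (π*x^2)) x := by
  have hπ : (π:ℝ) ≠ 0 := Real.pi_ne_zero
  have hu : HasDerivAt (fun y => Real.sin (π*L*y)) (Real.cos (π*L*x) * (π*L*1)) x :=
    ((hasDerivAt_id x).const_mul (π*L)).sin
  have hv : HasDerivAt (fun y => π*y) (π*1) x := (hasDerivAt_id x).const_mul π
  have hne : π * x ≠ 0 := mul_ne_zero hπ hx
  have := hu.div hv hne
  refine this.congr_deriv ?_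
  rw [div_eq_div_iff (by simp [hπ, hx]) (by simp [hπ, hx])]
  ring

lemma sinc_deriv_bound (L x : ℝ) (hL : 0 < L) (hx : x ≠ 0) :
    |(π*L*x*Real.cos (π*L*x) - Real.sin (π*L*x)) / (π*x^2)|
      ≤ min (2*L/|x|) (π^2*L^3*|x|) := by
  have hπ : (0:ℝ) < π := Real.pi_pos
  have hx2 : (0:ℝ) < π * x^2 := by positivity
  have hxa : (0:ℝ) < |x| := abs_pos.mpr hx
  set t := π*L*x with ht
  have habs : |(t*Real.cos t - Real.sin t) / (π*x^2)|
      = |Real.sin t - t*Real.cos t| / (π*x^2) := by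
    rw [abs_div, abs_of_pos hx2, abs_sub_comm]
  rw [habs]
  have htabs : |t| = π*L*|x| := by
    rw [ht, abs_mul, abs_mul, abs_of_pos hπ, abs_of_pos hL]
  have hxsq : x^2 = |x|^2 := (sq_abs x).symm
  apply le_min
  · have h1 : |Real.sin t| ≤ |t| := Real.abs_sin_le_abs
    have h2 : |t*Real.cos t| ≤ |t| := by
      rw [abs_mul]
      calc |t| * |Real.cos t| ≤ |t| * 1 :=
        mul_le_mul_of_nonneg_left (Real.abs_cos_le_one t) (abs_nonneg t)
      _ = |t| := mul_one _
    have hnum : |Real.sin t - t*Real.cos t| ≤ 2*(π*L*|x|) := by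
      have := abs_sub (Real.sin t) (t*Real.cos t)
      rw [htabs] at h1 h2
      linarith
    have : |Real.sin t - t*Real.cos t| / (π*x^2) ≤ 2*(π*L*|x|) / (π*x^2) :=
      div_le_div_of_nonneg_right hnum hx2.le
    calc |Real.sin t - t*Real.cos t| / (π*x^2) ≤ 2*(π*L*|x|) / (π*x^2) := this
      _ = 2*L/|x| := by field_simp; rw [hxsq]
  · have hnum : |Real.sin t - t*Real.cos t| ≤ (π*L*|x|)^3 := by
      have := sin_sub_mul_cos_bound t
      rwa [htabs] at this
    have h3 : |Real.sin t - t*Real.cos t| / (π*x^2) ≤ (π*L*|x|)^3 / (π*x^2) :=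
      div_le_div_of_nonneg_right hnum hx2.le
    calc |Real.sin t - t*Real.cos t| / (π*x^2) ≤ (π*L*|x|)^3 / (π*x^2) := h3
      _ = π^2*L^3*|x| := by field_simp; rw [hxsq]

theorem chiHat_shift (L : ℝ) (hL : 0 < L) :
    ∃ C : ℝ, ∀ a b : ℝ, b - a = L → ∀ ξ h : ℝ, 0 < |ξ| → |h| ≤ |ξ|/2 →
      ‖chiHat a b (ξ + h)
          - Complex.exp (-(2*π*((a+b)/2*h)) * Complex.I) * chiHat a b ξ‖
        ≤ C * |h| * min |ξ|⁻¹ |ξ| := by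
  refine ⟨max (8*L) ((3/2)*π^2*L^3), ?_⟩
  intro a b hab ξ h hξ hh
  subst hab
  set L := b - a with hLdef
  set C := max (8*L) ((3/2)*π^2*L^3) with hC
  have hπ : (0:ℝ) < π := Real.pi_pos
  have hξ0 : ξ ≠ 0 := by
    intro hz; rw [hz] at hξ; simp at hξ
  have habs_sub : |ξ| - |ξ + h| ≤ |h| := by
    have := abs_sub_abs_le_abs_sub ξ (ξ + h)
    simpa using this
  have hξh_lb : |ξ|/2 ≤ |ξ + h| := by linarith
  have hξh0 : ξ + h ≠ 0 := by
    intro hz; rw [hz] at hξh_lb; simp at hξh_lb; linarith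
  rw [chiHat_eq a b (ξ+h) hξh0, chiHat_eq a b ξ hξ0]
  set g : ℝ → ℝ := fun y => Real.sin (π*L*y) / (π*y) with hg
  set f' : ℝ → ℝ := fun x => (π*L*x*Real.cos (π*L*x) - Real.sin (π*L*x)) / (π*x^2) with hf'
  have eexp : Complex.exp (-(2*(π:ℂ)*(((a:ℂ)+(b:ℂ))/2*(h:ℂ))) * Complex.I) *
      Complex.exp (-(2*(π:ℂ)*(((a:ℂ)+(b:ℂ))/2)*(ξ:ℂ)) * Complex.I)
      = Complex.exp (-(2*(π:ℂ)*(((a:ℂ)+(b:ℂ))/2)*((ξ:ℂ)+(h:ℂ))) * Complex.I) := by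
    rw [← Complex.exp_add]; congr 1; ring
  have key : Complex.exp (-(2*(π:ℂ)*(((a:ℂ)+(b:ℂ))/2)*((ξ:ℂ)+(h:ℂ))) * Complex.I) * ((g (ξ+h) : ℝ) : ℂ)
      - Complex.exp (-(2*(π:ℂ)*(((a:ℂ)+(b:ℂ))/2*(h:ℂ))) * Complex.I) *
        (Complex.exp (-(2*(π:ℂ)*(((a:ℂ)+(b:ℂ))/2)*(ξ:ℂ)) * Complex.I) * ((g ξ : ℝ) : ℂ))
      = Complex.exp (-(2*(π:ℂ)*(((a:ℂ)+(b:ℂ))/2)*((ξ:ℂ)+(h:ℂ))) * Complex.I)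
        * (((g (ξ+h) - g ξ : ℝ)) : ℂ) := by
    rw [← mul_assoc, eexp]
    push_cast
    ring
  have hcast : ((ξ:ℂ)+(h:ℂ)) = ((ξ + h : ℝ) : ℂ) := by push_cast; ring
  rw [show ((ξ + h : ℝ) : ℂ) = (ξ:ℂ)+(h:ℂ) from by push_cast; ring] at *
  rw [key]
  rw [norm_mul]
  rw [show -(2*(π:ℂ)*(((a:ℂ)+(b:ℂ))/2)*((ξ:ℂ)+(h:ℂ))) * Complex.I
      = ((-(2*π*((a+b)/2)*(ξ+h)) : ℝ) : ℂ) * Complex.I from by push_cast; ring]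
  rw [Complex.norm_exp_ofReal_mul_I, one_mul, Complex.norm_real, Real.norm_eq_abs]
  -- now a real estimate
  set M : ℝ := min (2*L/(|ξ|/2)) (π^2*L^3*((3/2)*|ξ|)) with hM
  have hmem : ∀ x ∈ Set.uIcc ξ (ξ+h), |ξ|/2 ≤ |x| ∧ |x| ≤ (3/2)*|ξ| := by
    intro x hx
    have hd : |x - ξ| ≤ |h| := by
      rcases le_total ξ (ξ+h) with hc | hc
      · rw [Set.uIcc_of_le hc] at hx
        rw [abs_of_nonneg (by linarith [hx.1])]
        have := hx.2
        have hh0 : 0 ≤ h := by linarith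
        rw [abs_of_nonneg hh0]; linarith
      · rw [Set.uIcc_of_ge hc] at hx
        rw [abs_of_nonpos (by linarith [hx.2])]
        have hh0 : h ≤ 0 := by linarith
        rw [abs_of_nonpos hh0]; linarith [hx.1]
    have h1 : |x| - |ξ| ≤ |h| := by
      have := abs_sub_abs_le_abs_sub x ξ; linarith
    have h2 : |ξ| - |x| ≤ |h| := by
      have := abs_sub_abs_le_abs_sub ξ x
      rw [abs_sub_comm] at this; linarith
    constructor <;> linarith
  have hne : ∀ x ∈ Set.uIcc ξ (ξ+h), x ≠ 0 := by
    intro x hx hz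
    have := (hmem x hx).1
    rw [hz] at this; simp at this; linarith
  have hmvt : |g (ξ+h) - g ξ| ≤ M * |h| := by
    have := Convex.norm_image_sub_le_of_norm_hasDerivWithin_le
      (f := g) (f' := f') (s := Set.uIcc ξ (ξ+h)) (C := M)
      (fun x hx => (hasDerivAt_sinc L x (hne x hx)).hasDerivWithinAt)
      (fun x hx => by
        have hb := sinc_deriv_bound L x hL (hne x hx)
        have hx1 := (hmem x hx).1
        have hx2 := (hmem x hx).2
        have hxpos : 0 < |x| := lt_of_lt_of_le (by linarith) hx1
        refine le_trans hb (min_le_min ?_ ?_)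
        · apply div_le_div_of_nonneg_left (by linarith) (by linarith) hx1
        · have : π^2*L^3*|x| ≤ π^2*L^3*((3/2)*|ξ|) := by
            apply mul_le_mul_of_nonneg_left (by linarith) (by positivity)
          exact this)
      (convex_uIcc ξ (ξ+h)) (Set.left_mem_uIcc) (Set.right_mem_uIcc)
    simpa using this
  have hMC : M ≤ C * min |ξ|⁻¹ |ξ| := by
    have hA : 2*L/(|ξ|/2) ≤ C * |ξ|⁻¹ := by
      rw [div_div_eq_mul_div, div_eq_mul_inv]
      apply mul_le_mul_of_nonneg_right _ (by positivity)
      calc 2*L*2 = 8*L - 4*L := by ring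
        _ ≤ C := by
          have := le_max_left (8*L) ((3/2)*π^2*L^3)
          rw [← hC] at this
          linarith
    have hB : π^2*L^3*((3/2)*|ξ|) ≤ C * |ξ| := by
      rw [show π^2*L^3*((3/2)*|ξ|) = ((3/2)*π^2*L^3) * |ξ| from by ring]
      apply mul_le_mul_of_nonneg_right _ (abs_nonneg ξ)
      rw [hC]; exact le_max_right _ _
    rcases le_total (|ξ|⁻¹) (|ξ|) with hc | hc
    · rw [min_eq_left hc]
      exact le_trans (min_le_left _ _) hA
    · rw [min_eq_right hc]
      exact le_trans (min_le_right _ _) hB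
  have hMpos : 0 ≤ M := by
    have : 0 < 2*L/(|ξ|/2) := by positivity
    have : 0 ≤ π^2*L^3*((3/2)*|ξ|) := by positivity
    exact le_min (by positivity) this
  calc |g (ξ+h) - g ξ| ≤ M * |h| := hmvt
    _ ≤ (C * min |ξ|⁻¹ |ξ|) * |h| := mul_le_mul_of_nonneg_right hMC (abs_nonneg h)
    _ = C * |h| * min |ξ|⁻¹ |ξ| := by ring
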